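/- arXiv:nlin/0306048 — 5 statements merged into one kernel-verified Lean document; each statement's English description precedes it below -/
import Mathlib

section
/- If f ∈ L¹(0,∞) with f ≥ 0, ∫₀^∞ f = 1 and ∫₀^∞ x f(x) dx = 1, then the function η(t,z) = (1/t)·η₀(z)/(t(1-η₀(z)) + η₀(z)), where η₀(z) = ∫₀^∞ e^{-zx} f(x) dx, satisfies the ODE ∂ₜη = η² - 2η(t,0)·η for t ≥ 1 and Re z ≥ 0, with η(1,z) = η₀(z). -/
open MeasureTheory Set

/-- solution formula for the Laplace transform of Smoluchowski's
equation with constant kernel K = 2 satisfies the Riccati ODE. -/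
theorem smoluchowski_const_kernel_laplace_ode
    (f : ℝ → ℝ) (hf_int : IntegrableOn f (Ioi 0))
    (hf_nonneg : ∀ x ∈ Ioi (0:ℝ), 0 ≤ f x)
    (hf_mom0 : ∫ x in Ioi (0:ℝ), f x = 1)
    (hf_mom1_int : IntegrableOn (fun x => x * f x) (Ioi 0))
    (hf_mom1 : ∫ x in Ioi (0:ℝ), x * f x = 1)
    (η₀ : ℂ → ℂ)
    (hη₀ : ∀ z : ℂ, η₀ z = ∫ x in Ioi (0:ℝ), Complex.exp (-z * x) * (f x : ℂ))
    (η : ℝ → ℂ → ℂ)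
    (hη : ∀ (t : ℝ) (z : ℂ),
      η t z = (1 / (t : ℂ)) * η₀ z / ((t : ℂ) * (1 - η₀ z) + η₀ z)) :
    (∀ (t : ℝ), 1 ≤ t → ∀ z : ℂ, 0 ≤ z.re →
      HasDerivAt (fun t' : ℝ => η t' z) ((η t z) ^ 2 - 2 * η t 0 * η t z) t)
    ∧ ∀ z : ℂ, 0 ≤ z.re → η 1 z = η₀ z := by
  -- |η₀ z| ≤ 1 for Re z ≥ 0
  have habs : ∀ z : ℂ, 0 ≤ z.re → ‖η₀ z‖ ≤ 1 := by
    intro z hz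
    rw [hη₀]
    have h := norm_integral_le_of_norm_le (μ := volume.restrict (Ioi 0))
      (f := fun x : ℝ => Complex.exp (-z * x) * (f x : ℂ)) (g := f) hf_int ?_
    · simpa [hf_mom0] using h
    · rw [ae_restrict_iff' measurableSet_Ioi]
      filter_upwards with x hx
      have hx0 : (0:ℝ) < x := hx
      have hfx := hf_nonneg x hx
      have h1 : ‖Complex.exp (-z * x)‖ ≤ 1 := by
        rw [Complex.norm_exp]
        apply Real.exp_le_one_iff.mpr
        simp only [Complex.neg_re, Complex.mul_re, Complex.ofReal_re, Complex.ofReal_im]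
        nlinarith
      calc ‖Complex.exp (-z * x) * (f x : ℂ)‖ = ‖Complex.exp (-z * x)‖ * |f x| := by
            rw [norm_mul, Complex.norm_real, Real.norm_eq_abs]
        _ ≤ 1 * f x := by
            apply mul_le_mul h1 (le_of_eq (abs_of_nonneg hfx)) (abs_nonneg _) zero_le_one
        _ = f x := one_mul _
  -- η₀ 0 = 1
  have h0 : η₀ 0 = 1 := by
    rw [hη₀]
    simp only [neg_zero, zero_mul, Complex.exp_zero, one_mul]
    rw [← Complex.ofReal_one, ← hf_mom0]; exact integral_ofReal
  constructor
  · intro t ht z hz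
    set a := η₀ z with ha
    have haz : ‖a‖ ≤ 1 := habs z hz
    have htC : (t:ℂ) ≠ 0 := by
      exact_mod_cast (by linarith : t ≠ 0)
    -- denominator nonzero
    have hD : (t:ℂ) * (1 - a) + a ≠ 0 := by
      intro hzero
      have h1 : (t:ℂ) = (((t - 1 : ℝ)):ℂ) * a := by push_cast; linear_combination hzero
      have h2 := congrArg (fun w : ℂ => ‖w‖) h1
      simp only [norm_mul, Complex.norm_real, Real.norm_eq_abs] at h2
      rw [abs_of_nonneg (by linarith : (0:ℝ) ≤ t), abs_of_nonneg (by linarith : (0:ℝ) ≤ t - 1)] at h2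
      nlinarith [norm_nonneg a]
    have hP : (t:ℂ) * ((t:ℂ) * (1 - a) + a) ≠ 0 := mul_ne_zero htC hD
    -- derivative of g(s) = a / (s * (s*(1-a)+a))
    have hlin : HasDerivAt (fun s : ℂ => s * (1 - a) + a) (1 * (1 - a)) (t:ℂ) :=
      ((hasDerivAt_id (t:ℂ)).mul_const _).add_const _
    have hPd : HasDerivAt (fun s : ℂ => s * (s * (1 - a) + a))
        (1 * ((t:ℂ) * (1 - a) + a) + (t:ℂ) * (1 * (1 - a))) (t:ℂ) :=
      (hasDerivAt_id (t:ℂ)).mul hlin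
    have hdiv : HasDerivAt (fun s : ℂ => a / (s * (s * (1 - a) + a)))
        ((0 * ((t:ℂ) * ((t:ℂ) * (1 - a) + a)) -
          a * (1 * ((t:ℂ) * (1 - a) + a) + (t:ℂ) * (1 * (1 - a)))) /
          ((t:ℂ) * ((t:ℂ) * (1 - a) + a)) ^ 2) (t:ℂ) :=
      (hasDerivAt_const (t:ℂ) a).div hPd hP
    have key := hdiv.comp_ofReal
    have hfun : (fun t' : ℝ => η t' z) =
        fun t' : ℝ => a / ((t':ℂ) * ((t':ℂ) * (1 - a) + a)) := by
      funext s
      rw [hη, ← ha, one_div_mul_eq_div, div_div]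
    rw [hfun]
    have hηt0 : η t 0 = 1 / (t:ℂ) := by
      rw [hη, h0]; field_simp; ring
    rw [hηt0, hη, ← ha]
    convert key using 1
    field_simp
    ring
  · intro z hz
    rw [hη]
    simp
end

section
/- Suppose u, v : [τ₀, ∞) → ℂ satisfy du/dτ = -u(1-u) and dv/dτ = -2(1-u)v, with |u(τ₀)| < 1. Then for all τ ≥ τ₀, |v(τ)| ≤ |v(τ₀)| e^{-2(τ-τ₀)} / (1 - |u(τ₀)|)². -/
open Set

private lemma aux_deriv_U (p e d : ℂ) (hd : d ≠ 0) :
    (p * -e * d - p * e * -(p * e)) / d ^ 2 = -(p * e / d) * (1 - p * e / d) := by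
  field_simp
  ring

private lemma aux_deriv_V (w e d p : ℂ) (hd : d ≠ 0) :
    (w * (-e * e + e * -e) * (d * d) - w * (e * e) * (-(p * e) * d + d * -(p * e))) / (d * d) ^ 2
      = -2 * (1 - p * e / d) * (w * (e * e) / (d * d)) := by
  field_simp
  ring

/-- decay estimate along characteristics for v, where
du/dτ = -u(1-u) and dv/dτ = -2(1-u)v with |u(τ₀)| < 1. -/
theorem decay_estimate_v_constant_kernel
    (u v : ℝ → ℂ) (τ₀ : ℝ)
    (hu : ∀ τ : ℝ, τ₀ ≤ τ → HasDerivAt u (-(u τ) * (1 - u τ)) τ)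
    (hv : ∀ τ : ℝ, τ₀ ≤ τ → HasDerivAt v (-2 * (1 - u τ) * v τ) τ)
    (hu0 : ‖u τ₀‖ < 1) :
    ∀ τ : ℝ, τ₀ ≤ τ →
      ‖v τ‖ ≤ ‖v τ₀‖ * Real.exp (-2 * (τ - τ₀)) / (1 - ‖u τ₀‖) ^ 2 := by
  intro τ hτ
  set u₀ : ℂ := u τ₀ with hu₀def
  set a : ℝ := ‖u₀‖ with hadef
  have ha0 : 0 ≤ a := norm_nonneg _
  have ha1 : a < 1 := hu0
  -- explicit functions
  set E : ℝ → ℂ := fun t => ((Real.exp (τ₀ - t) : ℝ) : ℂ) with hEdef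
  set D : ℝ → ℂ := fun t => 1 - u₀ * (1 - E t) with hDdef
  set U : ℝ → ℂ := fun t => u₀ * E t / D t with hUdef
  set V : ℝ → ℂ := fun t => v τ₀ * (E t * E t) / (D t * D t) with hVdef
  have hE : ∀ t : ℝ, HasDerivAt E (-E t) t := by
    intro t
    have h1 : HasDerivAt (fun x : ℝ => τ₀ - x) (-1) t := (hasDerivAt_id t).const_sub τ₀
    have h2 := h1.exp
    have h3 := h2.ofReal_comp (z := t)
    simpa [hEdef, mul_comm] using h3
  have hEnorm : ∀ t : ℝ, ‖E t‖ = Real.exp (τ₀ - t) := by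
    intro t
    simp only [hEdef]
    rw [Complex.norm_real, Real.norm_eq_abs, abs_of_pos (Real.exp_pos _)]
  have hDlow : ∀ t : ℝ, τ₀ ≤ t → 1 - a ≤ ‖D t‖ := by
    intro t ht
    have he1 : Real.exp (τ₀ - t) ≤ 1 := Real.exp_le_one_iff.2 (by linarith)
    have he0 : 0 < Real.exp (τ₀ - t) := Real.exp_pos _
    have h1 : ‖u₀ * (1 - E t)‖ = a * (1 - Real.exp (τ₀ - t)) := by
      rw [norm_mul]
      congr 1
      have : (1 : ℂ) - E t = ((1 - Real.exp (τ₀ - t) : ℝ) : ℂ) := by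
        simp [hEdef]
      rw [this, Complex.norm_real, Real.norm_eq_abs, abs_of_nonneg (by linarith)]
    calc 1 - a ≤ 1 - a * (1 - Real.exp (τ₀ - t)) := by nlinarith
      _ = ‖(1 : ℂ)‖ - ‖u₀ * (1 - E t)‖ := by rw [h1]; simp
      _ ≤ ‖D t‖ := by
          have := norm_sub_norm_le (1 : ℂ) (u₀ * (1 - E t))
          simpa [hDdef] using this
  have hDne : ∀ t : ℝ, τ₀ ≤ t → D t ≠ 0 := by
    intro t ht h
    have := hDlow t ht
    rw [h] at this; simp at this; linarith
  have hD : ∀ t : ℝ, HasDerivAt D (-(u₀ * E t)) t := by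
    intro t
    have h1 : HasDerivAt (fun x => 1 - E x) (E t) t := by
      simpa using (hE t).const_sub 1
    have h2 : HasDerivAt (fun x => u₀ * (1 - E x)) (u₀ * E t) t := h1.const_mul u₀
    simpa [hDdef] using h2.const_sub 1
  have hU : ∀ t : ℝ, τ₀ ≤ t → HasDerivAt U (-(U t) * (1 - U t)) t := by
    intro t ht
    have h1 : HasDerivAt (fun x => u₀ * E x) (u₀ * (-E t)) t := (hE t).const_mul u₀
    have h2 := h1.div (hD t) (hDne t ht)
    have heq : (u₀ * -E t * D t - u₀ * E t * -(u₀ * E t)) / D t ^ 2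
        = -(U t) * (1 - U t) := by
      simp only [hUdef]
      exact aux_deriv_U u₀ (E t) (D t) (hDne t ht)
    rwa [heq] at h2
  have hV : ∀ t : ℝ, τ₀ ≤ t → HasDerivAt V (-2 * (1 - U t) * V t) t := by
    intro t ht
    have hEE : HasDerivAt (fun x => E x * E x) (-E t * E t + E t * -E t) t :=
      (hE t).mul (hE t)
    have h1 : HasDerivAt (fun x => v τ₀ * (E x * E x)) (v τ₀ * (-E t * E t + E t * -E t)) t :=
      hEE.const_mul (v τ₀)
    have h2 : HasDerivAt (fun x => D x * D x) (-(u₀ * E t) * D t + D t * -(u₀ * E t)) t :=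
      (hD t).mul (hD t)
    have hDD : D t * D t ≠ 0 := mul_ne_zero (hDne t ht) (hDne t ht)
    have h3 := h1.div h2 hDD
    have heq : (v τ₀ * (-E t * E t + E t * -E t) * (D t * D t) -
          v τ₀ * (E t * E t) * (-(u₀ * E t) * D t + D t * -(u₀ * E t))) / (D t * D t) ^ 2
        = -2 * (1 - U t) * V t := by
      simp only [hUdef, hVdef]
      exact aux_deriv_V (v τ₀) (E t) (D t) u₀ (hDne t ht)
    rwa [heq] at h3
  -- continuity
  have hucont : ContinuousOn u (Icc τ₀ τ) := fun t ht =>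
    ((hu t ht.1).continuousAt).continuousWithinAt
  have hvcont : ContinuousOn v (Icc τ₀ τ) := fun t ht =>
    ((hv t ht.1).continuousAt).continuousWithinAt
  have hUcont : ContinuousOn U (Icc τ₀ τ) := fun t ht =>
    ((hU t ht.1).continuousAt).continuousWithinAt
  have hVcont : ContinuousOn V (Icc τ₀ τ) := fun t ht =>
    ((hV t ht.1).continuousAt).continuousWithinAt
  -- bound R
  obtain ⟨C₁, hC₁⟩ := isCompact_Icc.exists_bound_of_continuousOn hucont
  obtain ⟨C₂, hC₂⟩ := isCompact_Icc.exists_bound_of_continuousOn hUcont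
  set R : ℝ := max (max C₁ C₂) 0 with hRdef
  have hR0 : 0 ≤ R := le_max_right _ _
  have huR : ∀ t ∈ Icc τ₀ τ, ‖u t‖ ≤ R := fun t ht =>
    (hC₁ t ht).trans ((le_max_left C₁ C₂).trans (le_max_left _ _))
  have hUR : ∀ t ∈ Icc τ₀ τ, ‖U t‖ ≤ R := fun t ht =>
    (hC₂ t ht).trans ((le_max_right C₁ C₂).trans (le_max_left _ _))
  -- first uniqueness : u = U on Icc
  set K₁ : NNReal := (1 + 2 * R).toNNReal with hK₁def
  have hLip : ∀ t : ℝ, LipschitzOnWith K₁ (fun z : ℂ => -z * (1 - z)) (Metric.closedBall 0 R) := by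
    intro t
    apply LipschitzOnWith.of_dist_le_mul
    intro x hx y hy
    simp only [Metric.mem_closedBall, dist_zero_right] at hx hy
    have key : -x * (1 - x) - -y * (1 - y) = (x - y) * (x + y - 1) := by ring
    rw [dist_eq_norm, dist_eq_norm, key, norm_mul]
    have h1 : ‖x + y - 1‖ ≤ 1 + 2 * R := by
      calc ‖x + y - 1‖ ≤ ‖x‖ + ‖y‖ + ‖(1:ℂ)‖ := by
            apply (norm_sub_le _ _).trans; gcongr; exact norm_add_le _ _
        _ ≤ 1 + 2 * R := by rw [norm_one]; linarith
    have hK : (K₁ : ℝ) = 1 + 2 * R := Real.coe_toNNReal _ (by linarith)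
    rw [hK, mul_comm]
    exact mul_le_mul h1 le_rfl (norm_nonneg _) (by linarith)
  have huU : EqOn u U (Icc τ₀ τ) := by
    apply ODE_solution_unique_of_mem_Icc_right
      (v := fun _ z => -z * (1 - z)) (s := fun _ => Metric.closedBall (0:ℂ) R)
      (fun t _ => hLip t) hucont
      (fun t ht => ((hu t ht.1).hasDerivWithinAt))
      (fun t ht => by simpa [Metric.mem_closedBall, dist_zero_right] using huR t (Ico_subset_Icc_self ht))
      hUcont
      (fun t ht => ((hU t ht.1).hasDerivWithinAt))
      (fun t ht => by simpa [Metric.mem_closedBall, dist_zero_right] using hUR t (Ico_subset_Icc_self ht))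
    simp [hUdef, hEdef, hDdef, hu₀def]
  -- second uniqueness : v = V on Icc
  set c : ℝ → ℂ := fun t => -2 * (1 - u t) with hcdef
  have hccont : ContinuousOn c (Icc τ₀ τ) := by
    apply ContinuousOn.mul continuousOn_const
    exact ContinuousOn.sub continuousOn_const hucont
  obtain ⟨M, hM⟩ := isCompact_Icc.exists_bound_of_continuousOn hccont
  have hM0 : 0 ≤ M := (norm_nonneg _).trans (hM τ₀ ⟨le_rfl, hτ⟩)
  set proj : ℝ → ℝ := fun t => max τ₀ (min t τ) with hprojdef
  have hprojmem : ∀ t, proj t ∈ Icc τ₀ τ := by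
    intro t
    constructor
    · exact le_max_left _ _
    · exact max_le hτ (min_le_right _ _)
  have hprojeq : ∀ t ∈ Icc τ₀ τ, proj t = t := by
    intro t ht
    simp [hprojdef, min_eq_left ht.2, max_eq_right ht.1]
  set K₂ : NNReal := M.toNNReal with hK₂def
  have hLip2 : ∀ t : ℝ, LipschitzOnWith K₂ (fun z : ℂ => c (proj t) * z) univ := by
    intro t
    apply LipschitzOnWith.of_dist_le_mul
    intro x _ y _
    rw [dist_eq_norm, dist_eq_norm, ← mul_sub, norm_mul]
    have : (K₂ : ℝ) = M := Real.coe_toNNReal _ hM0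
    rw [this]
    exact mul_le_mul_of_nonneg_right (hM _ (hprojmem t)) (norm_nonneg _)
  have hvV : EqOn v V (Icc τ₀ τ) := by
    apply ODE_solution_unique_of_mem_Icc_right
      (v := fun t z => c (proj t) * z) (s := fun _ => univ)
      (fun t _ => hLip2 t) hvcont
      (fun t ht => by
        show HasDerivWithinAt v (c (proj t) * v t) (Ici t) t
        rw [hprojeq t (Ico_subset_Icc_self ht)]
        exact (hv t ht.1).hasDerivWithinAt)
      (fun _ _ => mem_univ _)
      hVcont
      (fun t ht => by
        show HasDerivWithinAt V (c (proj t) * V t) (Ici t) t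
        rw [hprojeq t (Ico_subset_Icc_self ht)]
        show HasDerivWithinAt V (-2 * (1 - u t) * V t) (Ici t) t
        rw [huU (Ico_subset_Icc_self ht)]
        exact (hV t ht.1).hasDerivWithinAt)
      (fun _ _ => mem_univ _)
    simp [hVdef, hEdef, hDdef]
  -- conclude
  have hvτ : v τ = V τ := hvV ⟨hτ, le_rfl⟩
  rw [hvτ]
  have hDτ : 1 - a ≤ ‖D τ‖ := hDlow τ hτ
  have hDpos : 0 < ‖D τ‖ := lt_of_lt_of_le (by linarith) hDτ
  have hnorm : ‖V τ‖ = ‖v τ₀‖ * Real.exp (-2 * (τ - τ₀)) / ‖D τ‖ ^ 2 := by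
    simp only [hVdef, norm_div, norm_mul, hEnorm]
    congr 1
    · rw [← Real.exp_add]
      congr 1
      ring
    · exact (pow_two _).symm
  rw [hnorm]
  have h2 : (1 - a) ^ 2 ≤ ‖D τ‖ ^ 2 := by
    apply pow_le_pow_left₀ (by linarith) hDτ
  have h1 : (0:ℝ) < (1 - a) ^ 2 := pow_pos (by linarith) 2
  gcongr
end

section
/- Let g ∈ L¹(0,∞) and G(s) = ∫₀^∞ e^{-sx} g(x) dx for Re s ≥ 0. Then sup_{|s| = R, Re s ≥ 0} |G(s)| → 0 as R → ∞. -/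
open MeasureTheory Set
open Filter Topology

lemma RL_aux (f : ℝ → ℂ) :
    Tendsto (fun τ : ℝ => ∫ x : ℝ, Complex.exp (-(τ * x) * Complex.I) • f x)
      (cocompact ℝ) (𝓝 0) := by
  have h := Real.tendsto_integral_exp_smul_cocompact f
  have h2 : (0:ℝ) < 2 * Real.pi := by positivity
  have hdiv : Tendsto (fun τ : ℝ => τ / (2 * Real.pi)) (cocompact ℝ) (cocompact ℝ) := by
    rw [cocompact_eq_atBot_atTop]
    refine Tendsto.sup ?_ ?_
    · exact (tendsto_id.atBot_div_const h2).mono_right le_sup_left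
    · exact (tendsto_id.atTop_div_const h2).mono_right le_sup_right
  refine (h.comp hdiv).congr fun τ => ?_
  simp only [Function.comp_apply]
  congr 1 with x
  rw [Circle.smul_def, Real.fourierChar_apply]
  congr 2
  have hpi : (Real.pi:ℂ) ≠ 0 := Complex.ofReal_ne_zero.mpr Real.pi_ne_zero
  push_cast
  field_simp

lemma integrable_exp_mul (g : ℝ → ℝ) (hg : IntegrableOn g (Ioi 0)) (σ : ℝ) (hσ : 0 ≤ σ) :
    IntegrableOn (fun x => Real.exp (-σ * x) * g x) (Ioi 0) := by
  refine Integrable.mono hg ?_ ?_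
  · exact (Real.continuous_exp.comp (continuous_const.mul continuous_id)).aestronglyMeasurable.mul
      hg.aestronglyMeasurable
  · filter_upwards [ae_restrict_mem measurableSet_Ioi] with x hx
    simp only [Real.norm_eq_abs, abs_mul, Real.abs_exp]
    have h1 : Real.exp (-σ * x) ≤ 1 := by
      rw [Real.exp_le_one_iff]
      have : (0:ℝ) < x := hx
      nlinarith
    nlinarith [abs_nonneg (g x), Real.exp_pos (-σ * x)]

lemma exp_split (s : ℂ) (x : ℝ) (g₀ : ℝ) :
    Complex.exp (-s * x) * (g₀ : ℂ) =
      Complex.exp (-(s.im * x) * Complex.I) • ((Real.exp (-s.re * x) * g₀ : ℝ) : ℂ) := by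
  have hs : s = (s.re : ℂ) + (s.im : ℂ) * Complex.I := (Complex.re_add_im s).symm
  rw [smul_eq_mul]
  push_cast
  rw [← mul_assoc, ← Complex.exp_add]
  congr 1
  conv_lhs => rw [hs]
  ring_nf

-- representation of G as a full-line integral against an indicator

lemma rep_lemma (g : ℝ → ℝ) (s : ℂ) :
    (∫ x in Ioi (0:ℝ), Complex.exp (-s * x) * (g x : ℂ)) =
      ∫ x : ℝ, Complex.exp (-(s.im * x) * Complex.I) •
        (Ioi (0:ℝ)).indicator (fun x => ((Real.exp (-s.re * x) * g x : ℝ) : ℂ)) x := by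
  rw [← integral_indicator measurableSet_Ioi]
  refine integral_congr_ae (Eventually.of_forall fun x => ?_)
  by_cases hx : x ∈ Ioi (0:ℝ)
  · simp only [indicator_of_mem hx]
    exact exp_split s x (g x)
  · simp only [indicator_of_notMem hx, smul_zero]

lemma fσ_integrable (g : ℝ → ℝ) (hg : IntegrableOn g (Ioi 0)) (σ : ℝ) (hσ : 0 ≤ σ) :
    Integrable ((Ioi (0:ℝ)).indicator (fun x => ((Real.exp (-σ * x) * g x : ℝ) : ℂ))) := by
  rw [integrable_indicator_iff measurableSet_Ioi]
  exact (integrable_exp_mul g hg σ hσ).ofReal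

lemma kernel_integrable (g : ℝ → ℝ) (hg : IntegrableOn g (Ioi 0)) (σ : ℝ) (hσ : 0 ≤ σ) (τ : ℝ) :
    Integrable (fun x : ℝ => Complex.exp (-(τ * x) * Complex.I) •
      (Ioi (0:ℝ)).indicator (fun x => ((Real.exp (-σ * x) * g x : ℝ) : ℂ)) x) := by
  have hf := fσ_integrable g hg σ hσ
  refine Integrable.mono' hf.norm ?_ ?_
  · refine AEStronglyMeasurable.fun_smul ?_ hf.aestronglyMeasurable
    exact (Complex.continuous_exp.comp (by continuity)).aestronglyMeasurable
  · refine Eventually.of_forall fun x => ?_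
    rw [norm_smul]
    have h1 : ‖Complex.exp (-(τ * x) * Complex.I)‖ = 1 := by
      rw [Complex.norm_exp]
      simp
    rw [h1, one_mul]

lemma exp_I_norm (τ x : ℝ) : ‖Complex.exp (-(τ * x) * Complex.I)‖ = 1 := by
  rw [Complex.norm_exp]; simp

lemma tail_small (g : ℝ → ℝ) (hg : IntegrableOn g (Ioi 0)) {ε : ℝ} (hε : 0 < ε) :
    ∃ a : ℝ, 0 ≤ a ∧ (∫ x in Ioi (0:ℝ), Real.exp (-a * x) * |g x|) < ε := by
  have habs : IntegrableOn (fun x => |g x|) (Ioi 0) := hg.abs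
  have htend : Tendsto (fun a : ℝ => ∫ x in Ioi (0:ℝ), Real.exp (-a * x) * |g x|)
      atTop (𝓝 0) := by
    suffices H : Tendsto (fun a : ℝ => ∫ x in Ioi (0:ℝ), Real.exp (-a * x) * |g x|)
        atTop (𝓝 (∫ _x in Ioi (0:ℝ), (0:ℝ))) by simpa using H
    refine tendsto_integral_filter_of_dominated_convergence (l := atTop) (F := fun (a : ℝ) x => Real.exp (-a * x) * |g x|) (f := fun _ => (0:ℝ)) (fun x => |g x|) ?_ ?_ habs ?_
    · filter_upwards [eventually_ge_atTop (0:ℝ)] with a ha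
      exact (integrable_exp_mul (fun x => |g x|) habs a ha).aestronglyMeasurable
    · filter_upwards [eventually_ge_atTop (0:ℝ)] with a ha
      filter_upwards [ae_restrict_mem measurableSet_Ioi] with x hx
      have hx0 : (0:ℝ) < x := hx
      have h1 : Real.exp (-a * x) ≤ 1 := by rw [Real.exp_le_one_iff]; nlinarith
      have h2 : 0 < Real.exp (-a * x) := Real.exp_pos _
      rw [Real.norm_eq_abs, abs_mul, Real.abs_exp, abs_abs]
      nlinarith [abs_nonneg (g x)]
    · filter_upwards [ae_restrict_mem measurableSet_Ioi] with x hx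
      have hx0 : (0:ℝ) < x := hx
      have : Tendsto (fun a : ℝ => Real.exp (-a * x)) atTop (𝓝 0) := by
        refine Real.tendsto_exp_atBot.comp ?_
        have : Tendsto (fun a : ℝ => a * x) atTop atTop := tendsto_id.atTop_mul_const hx0
        exact (tendsto_neg_atBot_iff.mpr this).congr (fun a => by ring)
      simpa using this.mul_const |g x|
  have := (htend.eventually (gt_mem_nhds hε)).and (eventually_ge_atTop (0:ℝ))
  obtain ⟨a, ha1, ha2⟩ := this.exists
  exact ⟨a, ha2, ha1⟩

lemma phi_cont (g : ℝ → ℝ) (hg : IntegrableOn g (Ioi 0)) (σ₀ : ℝ) (hσ₀ : 0 ≤ σ₀) :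
    ContinuousAt (fun σ : ℝ => ∫ x in Ioi (0:ℝ),
      ‖Real.exp (-(max σ 0) * x) * g x - Real.exp (-σ₀ * x) * g x‖) σ₀ := by
  refine continuousAt_of_dominated ?_ ?_ ((hg.norm).const_mul 2) ?_
  · refine Eventually.of_forall fun σ => ?_
    have hc : Continuous fun x : ℝ => Real.exp (-(max σ 0) * x) := by continuity
    have hc₀ : Continuous fun x : ℝ => Real.exp (-σ₀ * x) := by continuity
    exact ((hc.aestronglyMeasurable.mul hg.aestronglyMeasurable).sub
      (hc₀.aestronglyMeasurable.mul hg.aestronglyMeasurable)).norm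
  · refine Eventually.of_forall fun σ => ?_
    filter_upwards [ae_restrict_mem measurableSet_Ioi] with x hx
    have hx0 : (0:ℝ) < x := hx
    have e1 : Real.exp (-(max σ 0) * x) ≤ 1 := by
      rw [Real.exp_le_one_iff]
      nlinarith [le_max_right σ 0]
    have e2 : Real.exp (-σ₀ * x) ≤ 1 := by
      rw [Real.exp_le_one_iff]; nlinarith
    have e3 : 0 < Real.exp (-(max σ 0) * x) := Real.exp_pos _
    have e4 : 0 < Real.exp (-σ₀ * x) := Real.exp_pos _
    rw [norm_norm, Real.norm_eq_abs]
    have := abs_sub (Real.exp (-(max σ 0) * x) * g x) (Real.exp (-σ₀ * x) * g x)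
    calc |Real.exp (-(max σ 0) * x) * g x - Real.exp (-σ₀ * x) * g x|
        ≤ |Real.exp (-(max σ 0) * x) * g x| + |Real.exp (-σ₀ * x) * g x| := abs_sub _ _
      _ ≤ 2 * ‖g x‖ := by
          rw [abs_mul, abs_mul, Real.abs_exp, Real.abs_exp, Real.norm_eq_abs]
          nlinarith [abs_nonneg (g x)]
  · refine Eventually.of_forall fun x => ?_
    refine Continuous.continuousAt ?_
    have : Continuous fun σ : ℝ => Real.exp (-(max σ 0) * x) := by continuity
    exact ((this.mul continuous_const).sub continuous_const).norm

lemma local_bound (g : ℝ → ℝ) (hg : IntegrableOn g (Ioi 0)) {ε : ℝ} (hε : 0 < ε)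
    (σ₀ : ℝ) (hσ₀ : 0 ≤ σ₀) :
    ∃ δ > 0, ∃ T : ℝ, ∀ s : ℂ, 0 ≤ s.re → |s.re - σ₀| < δ → T ≤ |s.im| →
      ‖∫ x in Ioi (0:ℝ), Complex.exp (-s * x) * (g x : ℂ)‖ < ε := by
  set Φ : ℝ → ℝ := fun σ => ∫ x in Ioi (0:ℝ),
      ‖Real.exp (-(max σ 0) * x) * g x - Real.exp (-σ₀ * x) * g x‖ with hΦdef
  have hΦ0 : Φ σ₀ = 0 := by
    have : ∀ x : ℝ, ‖Real.exp (-(max σ₀ 0) * x) * g x - Real.exp (-σ₀ * x) * g x‖ = 0 := by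
      intro x; rw [max_eq_left hσ₀]; simp
    simp only [hΦdef, this, integral_zero]
  have hΦcont := phi_cont g hg σ₀ hσ₀
  rw [Metric.continuousAt_iff] at hΦcont
  obtain ⟨δ, hδpos, hδ⟩ := hΦcont (ε/2) (by positivity)
  -- RL part
  have hRL := RL_aux ((Ioi (0:ℝ)).indicator (fun x => ((Real.exp (-σ₀ * x) * g x : ℝ) : ℂ)))
  have hev : ∀ᶠ τ : ℝ in cocompact ℝ,
      ‖∫ x : ℝ, Complex.exp (-(τ * x) * Complex.I) •
        (Ioi (0:ℝ)).indicator (fun x => ((Real.exp (-σ₀ * x) * g x : ℝ) : ℂ)) x‖ < ε/2 := by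
    have h := Metric.tendsto_nhds.mp hRL (ε/2) (by positivity)
    filter_upwards [h] with τ hτ
    simpa [dist_eq_norm] using hτ
  rw [cocompact_eq_atBot_atTop, eventually_sup, eventually_atBot, eventually_atTop] at hev
  obtain ⟨⟨T₁, hT₁⟩, ⟨T₂, hT₂⟩⟩ := hev
  refine ⟨δ, hδpos, max (-T₁) T₂, fun s hsre hsδ hsT => ?_⟩
  set σ := s.re with hσdef
  set τ := s.im with hτdef
  have hτsmall : ‖∫ x : ℝ, Complex.exp (-(τ * x) * Complex.I) •
      (Ioi (0:ℝ)).indicator (fun x => ((Real.exp (-σ₀ * x) * g x : ℝ) : ℂ)) x‖ < ε/2 := by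
    rcases le_or_gt 0 τ with h | h
    · refine hT₂ τ ?_
      have : |τ| = τ := abs_of_nonneg h
      calc T₂ ≤ max (-T₁) T₂ := le_max_right _ _
        _ ≤ |τ| := hsT
        _ = τ := this
    · refine hT₁ τ ?_
      have habs : |τ| = -τ := abs_of_neg h
      have : max (-T₁) T₂ ≤ -τ := habs ▸ hsT
      linarith [le_max_left (-T₁) T₂]
  -- difference bound
  have hΦσ : Φ σ < ε / 2 := by
    have h1 := hδ (show dist σ σ₀ < δ by rwa [Real.dist_eq])
    have h2 : dist (Φ σ) (Φ σ₀) < ε/2 := h1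
    rw [hΦ0, dist_eq_norm, sub_zero, Real.norm_eq_abs] at h2
    exact lt_of_le_of_lt (le_abs_self _) h2
  have hker₁ := kernel_integrable g hg σ hsre τ
  have hker₂ := kernel_integrable g hg σ₀ hσ₀ τ
  have hdiff : ‖(∫ x : ℝ, Complex.exp (-(τ * x) * Complex.I) •
        (Ioi (0:ℝ)).indicator (fun x => ((Real.exp (-σ * x) * g x : ℝ) : ℂ)) x) -
      (∫ x : ℝ, Complex.exp (-(τ * x) * Complex.I) •
        (Ioi (0:ℝ)).indicator (fun x => ((Real.exp (-σ₀ * x) * g x : ℝ) : ℂ)) x)‖ ≤ Φ σ := by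
    rw [← integral_sub hker₁ hker₂]
    have hnorm : ∀ x : ℝ, ‖Complex.exp (-(τ * x) * Complex.I) •
        (Ioi (0:ℝ)).indicator (fun x => ((Real.exp (-σ * x) * g x : ℝ) : ℂ)) x -
        Complex.exp (-(τ * x) * Complex.I) •
        (Ioi (0:ℝ)).indicator (fun x => ((Real.exp (-σ₀ * x) * g x : ℝ) : ℂ)) x‖ =
        (Ioi (0:ℝ)).indicator (fun x =>
          ‖Real.exp (-(max σ 0) * x) * g x - Real.exp (-σ₀ * x) * g x‖) x := by
      intro x
      rw [← smul_sub, norm_smul, exp_I_norm, one_mul]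
      by_cases hx : x ∈ Ioi (0:ℝ)
      · rw [indicator_of_mem hx, indicator_of_mem hx, indicator_of_mem hx]
        rw [max_eq_left hsre, ← Complex.ofReal_sub, Complex.norm_real]
      · rw [indicator_of_notMem hx, indicator_of_notMem hx, indicator_of_notMem hx]
        simp
    calc ‖∫ x : ℝ, (Complex.exp (-(τ * x) * Complex.I) •
        (Ioi (0:ℝ)).indicator (fun x => ((Real.exp (-σ * x) * g x : ℝ) : ℂ)) x -
        Complex.exp (-(τ * x) * Complex.I) •
        (Ioi (0:ℝ)).indicator (fun x => ((Real.exp (-σ₀ * x) * g x : ℝ) : ℂ)) x)‖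
        ≤ ∫ x : ℝ, ‖Complex.exp (-(τ * x) * Complex.I) •
        (Ioi (0:ℝ)).indicator (fun x => ((Real.exp (-σ * x) * g x : ℝ) : ℂ)) x -
        Complex.exp (-(τ * x) * Complex.I) •
        (Ioi (0:ℝ)).indicator (fun x => ((Real.exp (-σ₀ * x) * g x : ℝ) : ℂ)) x‖ :=
          norm_integral_le_integral_norm _
      _ = ∫ x : ℝ, (Ioi (0:ℝ)).indicator (fun x =>
          ‖Real.exp (-(max σ 0) * x) * g x - Real.exp (-σ₀ * x) * g x‖) x := by
          exact integral_congr_ae (Eventually.of_forall hnorm)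
      _ = Φ σ := by rw [integral_indicator measurableSet_Ioi]
  rw [rep_lemma g s, ← hσdef, ← hτdef]
  set A := ∫ x : ℝ, Complex.exp (-(τ * x) * Complex.I) •
        (Ioi (0:ℝ)).indicator (fun x => ((Real.exp (-σ * x) * g x : ℝ) : ℂ)) x
  set B := ∫ x : ℝ, Complex.exp (-(τ * x) * Complex.I) •
        (Ioi (0:ℝ)).indicator (fun x => ((Real.exp (-σ₀ * x) * g x : ℝ) : ℂ)) x
  calc ‖A‖ = ‖(A - B) + B‖ := by ring_nf
    _ ≤ ‖A - B‖ + ‖B‖ := norm_add_le _ _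
    _ < ε/2 + ε/2 := add_lt_add_of_le_of_lt (le_trans hdiff hΦσ.le) hτsmall
    _ = ε := by ring

/-- uniform Riemann–Lebesgue lemma on semicircles in the closed
right half plane: the Laplace transform of an integrable function on (0,∞)
tends to 0 uniformly on {|s| = R, Re s ≥ 0} as R → ∞. -/
theorem uniform_riemann_lebesgue_semicircle
    (g : ℝ → ℝ) (hg : IntegrableOn g (Ioi 0))
    (G : ℂ → ℂ)
    (hG : ∀ s : ℂ, G s = ∫ x in Ioi (0:ℝ), Complex.exp (-s * x) * (g x : ℂ)) :
    ∀ ε > 0, ∃ R₀ : ℝ, ∀ R : ℝ, R₀ ≤ R →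
      ∀ s : ℂ, ‖s‖ = R → 0 ≤ s.re → ‖G s‖ < ε := by
  intro ε hε
  obtain ⟨a, ha0, hatail⟩ := tail_small g hg hε
  have hchoice : ∀ σ₀ ∈ Icc (0:ℝ) a, ∃ δ > 0, ∃ T : ℝ,
      ∀ s : ℂ, 0 ≤ s.re → |s.re - σ₀| < δ → T ≤ |s.im| →
        ‖∫ x in Ioi (0:ℝ), Complex.exp (-s * x) * (g x : ℂ)‖ < ε :=
    fun σ₀ hσ₀ => local_bound g hg hε σ₀ hσ₀.1
  choose! δf hδf Tf hTf using hchoice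
  have hK : IsCompact (Icc (0:ℝ) a) := isCompact_Icc
  have hcover : Icc (0:ℝ) a ⊆ ⋃ σ₀ ∈ Icc (0:ℝ) a, Metric.ball σ₀ (δf σ₀) :=
    fun σ hσ => mem_biUnion hσ (Metric.mem_ball_self (hδf σ hσ))
  obtain ⟨t, hts, htfin, htcover⟩ :=
    hK.elim_finite_subcover_image (fun σ₀ _ => Metric.isOpen_ball) hcover
  set Tstar : ℝ := ∑ σ₀ ∈ htfin.toFinset, max (Tf σ₀) 0 with hTstar
  have hTstar0 : 0 ≤ Tstar := Finset.sum_nonneg fun i _ => le_max_right _ _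
  have hTle : ∀ σ₀ ∈ t, Tf σ₀ ≤ Tstar := by
    intro σ₀ hσ₀
    exact le_trans (le_max_left (Tf σ₀) 0)
      (Finset.single_le_sum (fun i _ => le_max_right (Tf i) 0) (htfin.mem_toFinset.mpr hσ₀))
  refine ⟨Real.sqrt (a^2 + Tstar^2), fun R hR s hsR hsre => ?_⟩
  rw [hG s]
  rcases le_or_gt s.re a with hcase | hcase
  · -- near the imaginary axis
    have hmem : s.re ∈ Icc (0:ℝ) a := ⟨hsre, hcase⟩
    obtain ⟨σ₀, hσ₀t, hballs⟩ := mem_iUnion₂.mp (htcover hmem)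
    have hdist : |s.re - σ₀| < δf σ₀ := by rwa [Metric.mem_ball, Real.dist_eq] at hballs
    have hR0 : 0 ≤ R := hsR ▸ norm_nonneg s
    have hsq : Tstar^2 ≤ s.im^2 := by
      have h1 : s.re^2 + s.im^2 = R^2 := by
        rw [← hsR, Complex.norm_def,
          Real.sq_sqrt (Complex.normSq_nonneg s), Complex.normSq_apply]
        ring
      have h2 : a^2 + Tstar^2 ≤ R^2 := by
        have := Real.sqrt_le_sqrt (le_of_eq (Real.sq_sqrt (by positivity : (0:ℝ) ≤ a^2 + Tstar^2)).symm)
        nlinarith [Real.sq_sqrt (by positivity : (0:ℝ) ≤ a^2 + Tstar^2), hR,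
          Real.sqrt_nonneg (a^2 + Tstar^2)]
      nlinarith
    have hT : Tstar ≤ |s.im| := by
      nlinarith [sq_abs s.im, abs_nonneg s.im]
    exact hTf σ₀ (hts hσ₀t) s hsre hdist (le_trans (hTle σ₀ hσ₀t) hT)
  · -- far right: direct decay
    have hbound : ‖∫ x in Ioi (0:ℝ), Complex.exp (-s * x) * (g x : ℂ)‖ ≤
        ∫ x in Ioi (0:ℝ), Real.exp (-a * x) * |g x| := by
      refine norm_integral_le_of_norm_le (integrable_exp_mul (fun x => |g x|) hg.abs a ha0) ?_
      filter_upwards [ae_restrict_mem measurableSet_Ioi] with x hx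
      have hx0 : (0:ℝ) < x := hx
      rw [norm_mul, Complex.norm_exp,
        Complex.norm_real, Real.norm_eq_abs]
      have hre : (-s * (x:ℂ)).re = -s.re * x := by
        simp [Complex.mul_re]
      rw [hre]
      have : Real.exp (-s.re * x) ≤ Real.exp (-a * x) := by
        apply Real.exp_le_exp.mpr
        nlinarith
      nlinarith [abs_nonneg (g x), Real.exp_pos (-s.re * x)]
    exact lt_of_le_of_lt hbound hatail
end

section
/- Suppose u, v : [t₀, ∞) → ℂ satisfy du/dt = -u(1-u) and dv/dt = -3(1-u)v with |u(t₀)| < 1. Then v(t) = v(t₀)e^{-3(t-t₀)} / (1 - u(t₀)(1 - e^{-(t-t₀)}))³, and |v(t)| ≤ |v(t₀)| e^{-3(t-t₀)} / (1 - |u(t₀)|)³ for t ≥ t₀. -/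
open Set

lemma ode_const_exp {f : ℝ → ℂ} {k : ℂ} {a b : ℝ} (hab : a ≤ b)
    (hf : ∀ s ∈ Set.Icc a b, HasDerivAt f (k * f s) s) :
    f b = f a * Complex.exp (k * ((b : ℂ) - (a : ℂ))) := by
  set g : ℝ → ℂ := fun t => f t * Complex.exp (-(k * t)) with hgdef
  have hg : ∀ s ∈ Set.Icc a b, HasDerivAt g 0 s := by
    intro s hs
    have h1 : HasDerivAt (fun t : ℝ => -(k * (t : ℂ))) (-k) s := by
      convert ((Complex.ofRealCLM.hasDerivAt (x := s)).const_mul k).neg using 1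
      · rfl
      · rfl
      · simp
    have h2 := h1.cexp
    have h3 := (hf s hs).mul h2
    convert h3 using 1
    · rfl
    · rfl
    ring
  have hcont : ContinuousOn g (Set.Icc a b) := fun s hs =>
    (hg s hs).continuousAt.continuousWithinAt
  have key := constant_of_has_deriv_right_zero hcont
    (fun x hx => ((hg x ⟨hx.1, hx.2.le⟩).hasDerivWithinAt)) b (Set.right_mem_Icc.mpr hab)
  have h2 : f b * (Complex.exp (-(k * b)) * Complex.exp (k * b)) =
      f a * (Complex.exp (-(k * a)) * Complex.exp (k * b)) := by
    rw [← mul_assoc, ← mul_assoc]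
    exact congrArg (· * Complex.exp (k * b)) key
  rw [← Complex.exp_add, ← Complex.exp_add, neg_add_cancel, Complex.exp_zero, mul_one] at h2
  rw [h2]
  congr 1
  ring_nf

lemma additive_formulas (u v : ℝ → ℂ) (t₀ : ℝ)
    (hu : ∀ t : ℝ, t₀ ≤ t → HasDerivAt u (-(u t) * (1 - u t)) t)
    (hv : ∀ t : ℝ, t₀ ≤ t → HasDerivAt v (-3 * (1 - u t) * v t) t)
    (hu0 : ‖u t₀‖ < 1) {b : ℝ} (hb : t₀ ≤ b)
    (hne : ∀ s ∈ Set.Icc t₀ b, u s ≠ 1) :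
    (1 - u b) * (1 - u t₀ * (1 - (Real.exp (-(b - t₀)) : ℂ))) = 1 - u t₀
    ∧ v b = v t₀ * (Real.exp (-3 * (b - t₀)) : ℂ)
        / (1 - u t₀ * (1 - (Real.exp (-(b - t₀)) : ℂ))) ^ 3 := by
  have h1 : ∀ s ∈ Set.Icc t₀ b, (1 : ℂ) - u s ≠ 0 := by
    intro s hs
    exact sub_ne_zero.mpr (Ne.symm (hne s hs))
  have h0 : (1 : ℂ) - u t₀ ≠ 0 := h1 t₀ ⟨le_refl _, hb⟩
  have hb1 : (1 : ℂ) - u b ≠ 0 := h1 b ⟨hb, le_refl _⟩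
  -- y = u/(1-u) satisfies y' = -y
  have hy : ∀ s ∈ Set.Icc t₀ b,
      HasDerivAt (fun s => u s / (1 - u s)) ((-1 : ℂ) * (u s / (1 - u s))) s := by
    intro s hs
    have hden := h1 s hs
    have hus := hu s hs.1
    have hd := hus.div (((hasDerivAt_const s (1 : ℂ)).sub hus)) hden
    convert hd using 1
    · rfl
    · rfl
    simp only [Pi.sub_apply]
    rw [neg_one_mul, ← neg_div, div_eq_div_iff hden (pow_ne_zero 2 hden)]
    ring
  -- r = v/(1-u)^3 satisfies r' = -3 r
  have hr : ∀ s ∈ Set.Icc t₀ b,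
      HasDerivAt (fun s => v s / (1 - u s) ^ 3) ((-3 : ℂ) * (v s / (1 - u s) ^ 3)) s := by
    intro s hs
    have hden := h1 s hs
    have hus := hu s hs.1
    have hvs := hv s hs.1
    have hq : HasDerivAt (fun s => (1 : ℂ) - u s) (u s * (1 - u s)) s := by
      have := (hasDerivAt_const s (1 : ℂ)).sub hus
      convert this using 1
      · rfl
      · rfl
      ring
    have hq3 : HasDerivAt (fun s => ((1 : ℂ) - u s) ^ 3)
        (3 * (1 - u s) ^ 2 * (u s * (1 - u s))) s := by
      have h := (hq.mul hq).mul hq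
      have heq : (fun s => ((1 : ℂ) - u s) * (1 - u s) * (1 - u s))
          = fun s => ((1 : ℂ) - u s) ^ 3 := by
        funext s; ring
      change HasDerivAt (fun s => ((1 : ℂ) - u s) * (1 - u s) * (1 - u s)) _ s at h
      rw [heq] at h
      convert h using 1
      simp only [Pi.mul_apply]
      ring
    have hd := hvs.div hq3 (pow_ne_zero 3 hden)
    convert hd using 1
    · rfl
    · rfl
    rw [← mul_div_assoc, div_eq_div_iff (pow_ne_zero 3 hden) (pow_ne_zero 2 (pow_ne_zero 3 hden))]
    ring
  have yb := ode_const_exp hb hy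
  have rb := ode_const_exp hb hr
  -- exponentials
  have he1 : (Real.exp (-(b - t₀)) : ℂ) = Complex.exp ((-1 : ℂ) * ((b : ℂ) - (t₀ : ℂ))) := by
    rw [Complex.ofReal_exp]
    push_cast
    ring_nf
  have he3 : (Real.exp (-3 * (b - t₀)) : ℂ) = Complex.exp ((-3 : ℂ) * ((b : ℂ) - (t₀ : ℂ))) := by
    rw [Complex.ofReal_exp]
    push_cast
    ring_nf
  set E : ℂ := (Real.exp (-(b - t₀)) : ℂ) with hEdef
  set e3 : ℂ := (Real.exp (-3 * (b - t₀)) : ℂ) with he3def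
  rw [← he1] at yb
  rw [← he3] at rb
  field_simp at yb
  set w : ℂ := 1 - u t₀ * (1 - E) with hwdef
  have hrel : (1 - u b) * w = 1 - u t₀ := by linear_combination -yb
  have hwne : w ≠ 0 := by
    intro h
    rw [h, mul_zero] at hrel
    exact h0 hrel.symm
  refine ⟨hrel, ?_⟩
  have rb' : v b * (1 - u t₀) ^ 3 = v t₀ * e3 * (1 - u b) ^ 3 := by
    field_simp at rb
    linear_combination rb
  rw [eq_div_iff (pow_ne_zero 3 hwne)]
  apply mul_right_cancel₀ (pow_ne_zero 3 hb1)
  calc v b * w ^ 3 * (1 - u b) ^ 3 = v b * ((1 - u b) * w) ^ 3 := by ring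
    _ = v b * (1 - u t₀) ^ 3 := by rw [hrel]
    _ = v t₀ * e3 * (1 - u b) ^ 3 := rb'

lemma w_norm_bounds (z : ℂ) {τ : ℝ} (hτ : 0 ≤ τ) :
    1 - ‖z‖ ≤ ‖(1 : ℂ) - z * (1 - (Real.exp (-τ) : ℂ))‖ ∧
      ‖(1 : ℂ) - z * (1 - (Real.exp (-τ) : ℂ))‖ ≤ 1 + ‖z‖ := by
  have hE0 : 0 < Real.exp (-τ) := Real.exp_pos _
  have hE1 : Real.exp (-τ) ≤ 1 := Real.exp_le_one_iff.mpr (by linarith)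
  have hcast : (1 : ℂ) - (Real.exp (-τ) : ℂ) = ((1 - Real.exp (-τ) : ℝ) : ℂ) := by
    push_cast; ring
  have hn : ‖(1 : ℂ) - (Real.exp (-τ) : ℂ)‖ ≤ 1 := by
    rw [hcast, Complex.norm_real, Real.norm_eq_abs, abs_of_nonneg (by linarith)]
    linarith
  have hmul : ‖z * ((1 : ℂ) - (Real.exp (-τ) : ℂ))‖ ≤ ‖z‖ := by
    rw [norm_mul]
    calc ‖z‖ * ‖(1 : ℂ) - (Real.exp (-τ) : ℂ)‖ ≤ ‖z‖ * 1 :=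
          mul_le_mul_of_nonneg_left hn (norm_nonneg z)
      _ = ‖z‖ := mul_one _
  constructor
  · calc 1 - ‖z‖ ≤ ‖(1 : ℂ)‖ - ‖z * (1 - (Real.exp (-τ) : ℂ))‖ := by
          rw [norm_one]; linarith
      _ ≤ ‖(1 : ℂ) - z * (1 - (Real.exp (-τ) : ℂ))‖ := norm_sub_norm_le _ _
  · calc ‖(1 : ℂ) - z * (1 - (Real.exp (-τ) : ℂ))‖
        ≤ ‖(1 : ℂ)‖ + ‖z * (1 - (Real.exp (-τ) : ℂ))‖ := norm_sub_le _ _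
      _ ≤ 1 + ‖z‖ := by rw [norm_one]; linarith

lemma never_one (u v : ℝ → ℂ) (t₀ : ℝ)
    (hu : ∀ t : ℝ, t₀ ≤ t → HasDerivAt u (-(u t) * (1 - u t)) t)
    (hv : ∀ t : ℝ, t₀ ≤ t → HasDerivAt v (-3 * (1 - u t) * v t) t)
    (hu0 : ‖u t₀‖ < 1) : ∀ t : ℝ, t₀ ≤ t → u t ≠ 1 := by
  by_contra h
  push_neg at h
  obtain ⟨t₁, ht₁, hu1⟩ := h
  set B : Set ℝ := {s ∈ Set.Icc t₀ t₁ | u s = 1} with hBdef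
  have hcontu : ContinuousOn u (Set.Icc t₀ t₁) := fun s hs =>
    (hu s hs.1).continuousAt.continuousWithinAt
  have hBclosed : IsClosed B :=
    hcontu.preimage_isClosed_of_isClosed isClosed_Icc isClosed_singleton
  have hBsub : B ⊆ Set.Icc t₀ t₁ := fun s hs => hs.1
  have hBcpt : IsCompact B := isCompact_Icc.of_isClosed_subset hBclosed hBsub
  have hBne : B.Nonempty := ⟨t₁, ⟨⟨ht₁, le_refl _⟩, hu1⟩⟩
  set T : ℝ := sInf B with hTdef
  have hTmem : T ∈ B := hBcpt.sInf_mem hBne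
  have hT0 : t₀ ≤ T := hTmem.1.1
  have hT1 : u T = 1 := hTmem.2
  have hu0ne : u t₀ ≠ 1 := by
    intro h
    rw [h, norm_one] at hu0
    exact lt_irrefl _ hu0
  have hTlt : t₀ < T := by
    rcases lt_or_eq_of_le hT0 with h | h
    · exact h
    · exact absurd hT1 (h ▸ hu0ne)
  have hbefore : ∀ s ∈ Set.Ico t₀ T, u s ≠ 1 := by
    intro s hs hseq
    have hsB : s ∈ B := ⟨⟨hs.1, le_trans hs.2.le hTmem.1.2⟩, hseq⟩
    exact absurd (csInf_le hBcpt.bddBelow hsB) (not_le.mpr hs.2)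
  have hδpos : 0 < ‖(1 : ℂ) - u t₀‖ := by
    rw [norm_pos_iff, sub_ne_zero]
    exact Ne.symm hu0ne
  have hclaim : ∀ s ∈ Set.Ico t₀ T, ‖(1 : ℂ) - u t₀‖ / 2 ≤ ‖(1 : ℂ) - u s‖ := by
    intro s hs
    have hnes : ∀ σ ∈ Set.Icc t₀ s, u σ ≠ 1 := fun σ hσ =>
      hbefore σ ⟨hσ.1, lt_of_le_of_lt hσ.2 hs.2⟩
    obtain ⟨hrel, -⟩ := additive_formulas u v t₀ hu hv hu0 hs.1 hnes
    have hnorm : ‖(1 : ℂ) - u s‖ * ‖(1 : ℂ) - u t₀ * (1 - (Real.exp (-(s - t₀)) : ℂ))‖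
        = ‖(1 : ℂ) - u t₀‖ := by rw [← norm_mul, hrel]
    have hub := (w_norm_bounds (u t₀) (by linarith [hs.1] : (0:ℝ) ≤ s - t₀)).2
    have h2 : ‖(1 : ℂ) - u t₀ * (1 - (Real.exp (-(s - t₀)) : ℂ))‖ ≤ 2 := by linarith
    nlinarith [norm_nonneg ((1 : ℂ) - u s),
      norm_nonneg ((1 : ℂ) - u t₀ * (1 - (Real.exp (-(s - t₀)) : ℂ)))]
  have hcont : ContinuousAt u T := (hu T hT0).continuousAt
  have hNB : (nhdsWithin T (Set.Ico t₀ T)).NeBot := by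
    apply mem_closure_iff_nhdsWithin_neBot.mp
    rw [closure_Ico (ne_of_lt hTlt)]
    exact ⟨le_of_lt hTlt, le_refl _⟩
  have htend : Filter.Tendsto (fun s => ‖(1 : ℂ) - u s‖) (nhdsWithin T (Set.Ico t₀ T))
      (nhds ‖(1 : ℂ) - u T‖) :=
    ((continuous_norm.comp (continuous_const.sub continuous_id)).tendsto (u T)).comp
      hcont.continuousWithinAt
  have hge : ‖(1 : ℂ) - u t₀‖ / 2 ≤ ‖(1 : ℂ) - u T‖ :=
    ge_of_tendsto htend (Filter.eventually_iff_exists_mem.mpr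
      ⟨Set.Ico t₀ T, self_mem_nhdsWithin, fun s hs => hclaim s hs⟩)
  rw [hT1, sub_self, norm_zero] at hge
  linarith

/-- explicit solution and decay estimate for v along
characteristics for the additive kernel: du/dt = -u(1-u), dv/dt = -3(1-u)v. -/
theorem additive_kernel_v_solution_and_decay
    (u v : ℝ → ℂ) (t₀ : ℝ)
    (hu : ∀ t : ℝ, t₀ ≤ t → HasDerivAt u (-(u t) * (1 - u t)) t)
    (hv : ∀ t : ℝ, t₀ ≤ t → HasDerivAt v (-3 * (1 - u t) * v t) t)
    (hu0 : ‖u t₀‖ < 1) :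
    ∀ t : ℝ, t₀ ≤ t →
      v t = v t₀ * (Real.exp (-3 * (t - t₀)) : ℂ)
              / (1 - u t₀ * (1 - (Real.exp (-(t - t₀)) : ℂ))) ^ 3
      ∧ ‖v t‖ ≤ ‖v t₀‖ * Real.exp (-3 * (t - t₀)) / (1 - ‖u t₀‖) ^ 3 := by
  intro t ht
  have hne : ∀ s ∈ Set.Icc t₀ t, u s ≠ 1 := fun s hs =>
    never_one u v t₀ hu hv hu0 s hs.1
  obtain ⟨hrel, hform⟩ := additive_formulas u v t₀ hu hv hu0 ht hne
  refine ⟨hform, ?_⟩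
  have hτ : (0 : ℝ) ≤ t - t₀ := by linarith
  have hwlb := (w_norm_bounds (u t₀) hτ).1
  set w : ℂ := 1 - u t₀ * (1 - (Real.exp (-(t - t₀)) : ℂ)) with hwdef
  have hpos : (0 : ℝ) < 1 - ‖u t₀‖ := by linarith
  have hwpos : (0 : ℝ) < ‖w‖ := lt_of_lt_of_le hpos hwlb
  rw [hform]
  rw [norm_div, norm_mul, norm_pow, Complex.norm_real, Real.norm_eq_abs,
    abs_of_pos (Real.exp_pos _)]
  gcongr
end

section
/- With φ₀ as above, the curve k ↦ s(t;0,ik) = e^{2t}(ik - φ₀(ik)(1 - e^{-t})) satisfies Im d/dk s(t;0,ik) ≥ e^{2t}(1 - |u₀(ik)|(1 - e^{-t})) > 0 for all real k, where u₀ = φ₀'. Hence along this curve Im s is strictly increasing in k, so Re s is a function of Im s. -/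
open MeasureTheory Set

private lemma norm_one_sub_cexp (z : ℂ) (hz : z.re = 0) :
    ‖(1 : ℂ) - Complex.exp z‖ ≤ 2 * ‖z‖ := by
  rw [norm_sub_rev]
  by_cases h : ‖z‖ ≤ 1
  · simpa using Complex.norm_exp_sub_one_le h
  · have h1 : ‖Complex.exp z‖ = 1 := by
      rw [Complex.norm_exp, hz, Real.exp_zero]
    calc ‖Complex.exp z - 1‖ ≤ ‖Complex.exp z‖ + ‖(1:ℂ)‖ := norm_sub_le _ _
      _ = 2 := by rw [h1, norm_one]; norm_num
      _ ≤ 2 * ‖z‖ := by nlinarith [not_le.mp h]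

private lemma hasDerivAt_phi_curve (n₀ : ℝ → ℝ) (hmeas : Measurable n₀)
    (hint1 : IntegrableOn (fun x => x * n₀ x) (Ioi 0)) (k : ℝ) :
    HasDerivAt
      (fun k' : ℝ => ∫ x in Ioi (0:ℝ),
        (1 - Complex.exp (-(Complex.I * k') * x)) * (n₀ x : ℂ))
      (∫ x in Ioi (0:ℝ),
        Complex.I * x * Complex.exp (-(Complex.I * k) * x) * (n₀ x : ℂ)) k := by
  have hmeasF : ∀ k' : ℝ, AEStronglyMeasurable
      (fun x : ℝ => (1 - Complex.exp (-(Complex.I * k') * x)) * (n₀ x : ℂ))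
      (volume.restrict (Ioi 0)) := by
    intro k'
    exact (((Continuous.sub continuous_const
      (Complex.continuous_exp.comp (by fun_prop))).measurable).mul
      (Complex.measurable_ofReal.comp hmeas)).aestronglyMeasurable
  have hre : ∀ (a x : ℝ), (-(Complex.I * a) * x).re = 0 := by
    intro a x
    simp
  have habs : ∀ (a x : ℝ), ‖-(Complex.I * a) * x‖ = |a| * |x| := by
    intro a x
    simp [map_mul]
  have key := hasDerivAt_integral_of_dominated_loc_of_deriv_le
    (F := fun (k' : ℝ) (x : ℝ) =>
      (1 - Complex.exp (-(Complex.I * k') * x)) * (n₀ x : ℂ))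
    (F' := fun (k' : ℝ) (x : ℝ) =>
      Complex.I * x * Complex.exp (-(Complex.I * k') * x) * (n₀ x : ℂ))
    (x₀ := k) (bound := fun x => |x| * |n₀ x|)
    (μ := volume.restrict (Ioi 0)) (s := Metric.ball k 1) (Metric.ball_mem_nhds k one_pos)
    (Filter.Eventually.of_forall fun k' => hmeasF k')
    ?hint ?hmeas' ?hbound ?hbint ?hdiff
  · exact key.2
  · -- integrability of F k
    apply Integrable.mono ((hint1.norm).const_mul (2 * |k|))
    · exact hmeasF k
    · refine Filter.Eventually.of_forall fun x => ?_
      have h1 := norm_one_sub_cexp (-(Complex.I * k) * x) (hre k x)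
      rw [habs] at h1
      have hn : (0:ℝ) ≤ |n₀ x| := abs_nonneg _
      calc ‖(1 - Complex.exp (-(Complex.I * k) * x)) * (n₀ x : ℂ)‖
          = ‖(1:ℂ) - Complex.exp (-(Complex.I * k) * x)‖ * |n₀ x| := by
            simp [Complex.norm_real]
        _ ≤ (2 * (|k| * |x|)) * |n₀ x| := by
            exact mul_le_mul_of_nonneg_right h1 hn
        _ ≤ ‖2 * |k| * ‖x * n₀ x‖‖ := by
            apply le_of_eq
            rw [Real.norm_eq_abs, Real.norm_eq_abs, abs_mul, abs_mul, abs_mul, abs_two,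
              abs_of_nonneg (mul_nonneg (abs_nonneg x) (abs_nonneg (n₀ x))), abs_abs]
            ring
  · -- a.e. strong measurability of F' k
    exact ((((Continuous.mul (continuous_const.mul Complex.continuous_ofReal)
      (Complex.continuous_exp.comp (by fun_prop))).measurable).mul
      (Complex.measurable_ofReal.comp hmeas)).aestronglyMeasurable)
  · -- bound
    refine Filter.Eventually.of_forall fun x => fun a _ => ?_
    have he : ‖Complex.exp (-(Complex.I * a * x))‖ = 1 := by
      rw [Complex.norm_exp]; simp
    simp [map_mul, he]
  · -- integrable bound
    have := hint1.norm
    simp only [Real.norm_eq_abs, abs_mul] at this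
    exact this
  · -- differentiability
    refine Filter.Eventually.of_forall fun x => fun a _ => ?_
    have h1 : HasDerivAt (fun z : ℂ => -(Complex.I * z) * x)
        (-Complex.I * x) (a : ℂ) := by
      simpa using (((hasDerivAt_id (a : ℂ)).const_mul Complex.I).neg).mul_const (x : ℂ)
    have h2 := (h1.cexp).comp_ofReal
    have h3 := ((hasDerivAt_const a (1 : ℂ)).sub h2).mul_const ((n₀ x : ℂ))
    exact h3.congr_deriv (by ring)

/-- the curve k ↦ s(t;0,ik) = e^{2t}(ik - φ₀(ik)(1-e^{-t})) has
derivative with imaginary part ≥ e^{2t}(1 - |u₀(ik)|(1-e^{-t})) > 0, so its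
imaginary part is strictly increasing in k (Γ_t is a graph). -/
theorem characteristic_curve_graph_property
    (n₀ : ℝ → ℝ) (hmeas : Measurable n₀)
    (hnonneg : ∀ x ∈ Ioi (0:ℝ), 0 ≤ n₀ x)
    (hint1 : IntegrableOn (fun x => x * n₀ x) (Ioi 0))
    (hmom1 : ∫ x in Ioi (0:ℝ), x * n₀ x = 1)
    (φ₀ u₀ : ℂ → ℂ)
    (hφ₀ : ∀ z : ℂ, φ₀ z = ∫ x in Ioi (0:ℝ), (1 - Complex.exp (-z * x)) * (n₀ x : ℂ))
    (hu₀ : ∀ z : ℂ, u₀ z = ∫ x in Ioi (0:ℝ), Complex.exp (-z * x) * ((x : ℂ) * (n₀ x : ℂ)))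
    (S : ℝ → ℝ → ℂ)
    (hS : ∀ (t : ℝ) (k : ℝ),
      S t k = (Real.exp (2 * t) : ℂ) *
        (Complex.I * k - φ₀ (Complex.I * k) * (1 - (Real.exp (-t) : ℂ)))) :
    ∀ t : ℝ, 0 < t →
      (∀ k : ℝ,
        HasDerivAt (fun k' : ℝ => S t k')
          ((Real.exp (2 * t) : ℂ) *
            (Complex.I - Complex.I * u₀ (Complex.I * k) * (1 - (Real.exp (-t) : ℂ)))) k
        ∧ Real.exp (2 * t) * (1 - ‖u₀ (Complex.I * k)‖ * (1 - Real.exp (-t)))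
            ≤ ((Real.exp (2 * t) : ℂ) *
              (Complex.I - Complex.I * u₀ (Complex.I * k) * (1 - (Real.exp (-t) : ℂ)))).im
        ∧ 0 < Real.exp (2 * t) * (1 - ‖u₀ (Complex.I * k)‖ * (1 - Real.exp (-t))))
      ∧ StrictMono (fun k : ℝ => (S t k).im) := by
  intro t ht
  -- basic facts about u₀ on the imaginary axis
  have hnorm_u : ∀ k : ℝ, ‖u₀ (Complex.I * k)‖ ≤ 1 := by
    intro k
    rw [hu₀]
    calc ‖∫ x in Ioi (0:ℝ), Complex.exp (-(Complex.I * k) * x) * ((x : ℂ) * (n₀ x : ℂ))‖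
        ≤ ∫ x in Ioi (0:ℝ), ‖Complex.exp (-(Complex.I * k) * x) * ((x : ℂ) * (n₀ x : ℂ))‖ :=
          norm_integral_le_integral_norm _
      _ = ∫ x in Ioi (0:ℝ), x * n₀ x := by
          apply setIntegral_congr_fun measurableSet_Ioi
          intro x hx
          have he : ‖Complex.exp (-(Complex.I * k * x))‖ = 1 := by
            rw [Complex.norm_exp]; simp
          have hxn : (0:ℝ) ≤ x * n₀ x := mul_nonneg (le_of_lt hx) (hnonneg x hx)
          simp [map_mul, he,
            abs_of_nonneg (le_of_lt (mem_Ioi.mp hx)), abs_of_nonneg (hnonneg x hx)]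
      _ = 1 := hmom1
  have hexp_t : Real.exp (-t) < 1 := by
    rw [Real.exp_lt_one_iff]; linarith
  have hc_nonneg : (0:ℝ) ≤ 1 - Real.exp (-t) := by linarith
  have hc_lt : 1 - Real.exp (-t) < 1 := by
    have := Real.exp_pos (-t); linarith
  have hpos : ∀ k : ℝ,
      0 < Real.exp (2 * t) * (1 - ‖u₀ (Complex.I * k)‖ * (1 - Real.exp (-t))) := by
    intro k
    apply mul_pos (Real.exp_pos _)
    have h1 : ‖u₀ (Complex.I * k)‖ * (1 - Real.exp (-t)) ≤ 1 * (1 - Real.exp (-t)) :=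
      mul_le_mul_of_nonneg_right (hnorm_u k) hc_nonneg
    rw [one_mul] at h1
    linarith
  -- the derivative
  have hderiv : ∀ k : ℝ, HasDerivAt (fun k' : ℝ => S t k')
      ((Real.exp (2 * t) : ℂ) *
        (Complex.I - Complex.I * u₀ (Complex.I * k) * (1 - (Real.exp (-t) : ℂ)))) k := by
    intro k
    have hphi := hasDerivAt_phi_curve n₀ hmeas hint1 k
    -- rewrite the integral function as φ₀ ∘ (I * ·)
    have hfun : (fun k' : ℝ => ∫ x in Ioi (0:ℝ),
        (1 - Complex.exp (-(Complex.I * k') * x)) * (n₀ x : ℂ))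
        = fun k' : ℝ => φ₀ (Complex.I * k') := by
      funext k'
      rw [hφ₀]
    rw [hfun] at hphi
    have hval : (∫ x in Ioi (0:ℝ),
        Complex.I * x * Complex.exp (-(Complex.I * k) * x) * (n₀ x : ℂ))
        = Complex.I * u₀ (Complex.I * k) := by
      rw [hu₀, ← integral_const_mul]
      apply setIntegral_congr_fun measurableSet_Ioi
      intro x _
      ring
    rw [hval] at hphi
    have hlin : HasDerivAt (fun k' : ℝ => Complex.I * (k' : ℂ)) Complex.I k := by
      simpa using ((hasDerivAt_id k).ofReal_comp.const_mul Complex.I)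
    have h4 := ((hlin.sub (hphi.mul_const (1 - (Real.exp (-t) : ℂ)))).const_mul
      ((Real.exp (2 * t) : ℂ)))
    have hfun2 : (fun k' : ℝ => (Real.exp (2 * t) : ℂ) *
        (Complex.I * (k' : ℂ) - φ₀ (Complex.I * k') * (1 - (Real.exp (-t) : ℂ))))
        = fun k' : ℝ => S t k' := by
      funext k'
      rw [hS]
    rw [← hfun2]
    exact h4
  -- imaginary part of the derivative
  have him : ∀ k : ℝ, ((Real.exp (2 * t) : ℂ) *
      (Complex.I - Complex.I * u₀ (Complex.I * k) * (1 - (Real.exp (-t) : ℂ)))).im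
      = Real.exp (2 * t) * (1 - (u₀ (Complex.I * k)).re * (1 - Real.exp (-t))) := by
    intro k
    simp only [Complex.mul_im, Complex.mul_re, Complex.sub_re, Complex.sub_im,
      Complex.ofReal_re, Complex.ofReal_im, Complex.I_re, Complex.I_im,
      Complex.one_re, Complex.one_im]
    ring
  have hle : ∀ k : ℝ,
      Real.exp (2 * t) * (1 - ‖u₀ (Complex.I * k)‖ * (1 - Real.exp (-t)))
      ≤ ((Real.exp (2 * t) : ℂ) *
        (Complex.I - Complex.I * u₀ (Complex.I * k) * (1 - (Real.exp (-t) : ℂ)))).im := by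
    intro k
    rw [him]
    apply mul_le_mul_of_nonneg_left _ (le_of_lt (Real.exp_pos _))
    have hre_le : (u₀ (Complex.I * k)).re ≤ ‖u₀ (Complex.I * k)‖ :=
      Complex.re_le_norm _
    nlinarith [hc_nonneg]
  refine ⟨fun k => ⟨hderiv k, hle k, hpos k⟩, ?_⟩
  apply strictMono_of_deriv_pos
  intro k
  have hd : HasDerivAt (fun k' : ℝ => (S t k').im)
      (((Real.exp (2 * t) : ℂ) *
        (Complex.I - Complex.I * u₀ (Complex.I * k) * (1 - (Real.exp (-t) : ℂ)))).im) k := by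
    have := Complex.imCLM.hasFDerivAt.comp_hasDerivAt k (hderiv k)
    exact this
  rw [hd.deriv]
  exact lt_of_lt_of_le (hpos k) (hle k)
end
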